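/- arXiv:1102.4859 — 2 statements merged into one kernel-verified Lean document; each statement's English description precedes it below -/
import Mathlib

section
/- If p ∈ M^ν_{d+1,d}(q), i.e., p = Σ_j g_j* g_j + Σ_j f_j* q f_j with matrix-valued noncommutative polynomials g_j of degree at most d+1 and f_j of degree at most d, where q is a monic linear pencil, and deg(p) ≤ 2d+1, then each g_j has degree at most d; consequently p ∈ M^ν_{d,d}(q). -/
open scoped Matrix BigOperators
noncomputable section

/-- Free noncommutative polynomials in `g` symmetric variables with real coefficients. -/
abbrev NCPoly (g : ℕ) := MonoidAlgebra ℝ (FreeMonoid (Fin g))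

namespace NCPoly

variable {g : ℕ}

/-- Reverse a word (the involution on the free monoid). -/
def wordStar (w : FreeMonoid (Fin g)) : FreeMonoid (Fin g) :=
  FreeMonoid.ofList (FreeMonoid.toList w).reverse

/-- The involution `*` on `ℝ⟨x⟩`, fixing the variables and reversing words. -/
def adj (p : NCPoly g) : NCPoly g := MonoidAlgebra.ofCoeff (Finsupp.mapDomain wordStar p.coeff)

/-- Degree of a noncommutative polynomial. -/
def deg (p : NCPoly g) : ℕ := p.coeff.support.sup fun w => (FreeMonoid.toList w).length

/-- The variable `x_i`. -/
def X (i : Fin g) : NCPoly g := MonoidAlgebra.single (FreeMonoid.of i) 1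

/-- Evaluation of `p` at a `g`-tuple of `n × n` real matrices. -/
def eval {n : ℕ} (X : Fin g → Matrix (Fin n) (Fin n) ℝ) (p : NCPoly g) :
    Matrix (Fin n) (Fin n) ℝ :=
  (MonoidAlgebra.lift ℝ (Matrix (Fin n) (Fin n) ℝ) (FreeMonoid (Fin g)))
    (FreeMonoid.lift X) p

/-- `p` is homogeneous of degree `m`. -/
def Homog (m : ℕ) (p : NCPoly g) : Prop :=
  ∀ w ∈ p.coeff.support, (FreeMonoid.toList w).length = m

end NCPoly

/-- Matrix-valued noncommutative polynomials. -/
abbrev MatPoly (g : ℕ) (I J : Type*) := Matrix I J (NCPoly g)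

namespace MatPoly

variable {g : ℕ}

/-- The involution on matrix polynomials: transpose and star entrywise. -/
def adj {I J : Type*} (P : MatPoly g I J) : MatPoly g J I := fun i j => NCPoly.adj (P j i)

/-- Degree of a matrix polynomial. -/
def deg {I J : Type*} [Fintype I] [Fintype J] (P : MatPoly g I J) : ℕ :=
  Finset.univ.sup fun p : I × J => NCPoly.deg (P p.1 p.2)

/-- Entrywise (Kronecker) evaluation at a tuple of symmetric `n × n` matrices. -/
def eval {I J : Type*} {n : ℕ} (X : Fin g → Matrix (Fin n) (Fin n) ℝ)
    (P : MatPoly g I J) : Matrix (I × Fin n) (J × Fin n) ℝ :=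
  fun ik jl => NCPoly.eval X (P ik.1 jl.1) ik.2 jl.2

/-- `P` is symmetric: `P* = P`. -/
def IsSymmP {I : Type*} (P : MatPoly g I I) : Prop := adj P = P

/-- The monic linear pencil `I - Σ A_j x_j`. -/
def pencil {ℓ : ℕ} (A : Fin g → Matrix (Fin ℓ) (Fin ℓ) ℝ) : MatPoly g (Fin ℓ) (Fin ℓ) :=
  (1 : Matrix (Fin ℓ) (Fin ℓ) (NCPoly g)) -
    ∑ j : Fin g, (A j).map (fun c => MonoidAlgebra.single (FreeMonoid.of j) c)

/-- A tuple of matrices is symmetric. -/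
def SymTuple {n : ℕ} (X : Fin g → Matrix (Fin n) (Fin n) ℝ) : Prop := ∀ j, (X j).IsSymm

/-- Membership in the nc semialgebraic set `𝔓_q` at level `n`. -/
def InP {I : Type*} [Fintype I] (q : MatPoly g I I) {n : ℕ}
    (X : Fin g → Matrix (Fin n) (Fin n) ℝ) : Prop :=
  SymTuple X ∧ (eval X q).PosSemidef

/-- `p` is a sum of hermitian squares of degree at most `α`. -/
def InSigma {ν : ℕ} (α : ℕ) (p : MatPoly g (Fin ν) (Fin ν)) : Prop :=
  ∃ (m : ℕ) (v : Fin m → Fin ν → NCPoly g),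
    (∀ k i, NCPoly.deg (v k i) ≤ α) ∧
    p = fun i j => ∑ k, NCPoly.adj (v k i) * v k j

/-- Membership in the truncated quadratic module `M^ν_{α,β}(q)`. -/
def InM {ℓ ν : ℕ} (α β : ℕ) (q : MatPoly g (Fin ℓ) (Fin ℓ))
    (p : MatPoly g (Fin ν) (Fin ν)) : Prop :=
  ∃ (σ : MatPoly g (Fin ν) (Fin ν)) (m : ℕ)
    (f : Fin m → MatPoly g (Fin ℓ) (Fin ν)),
    InSigma α σ ∧ (∀ k, deg (f k) ≤ β) ∧
    p = σ + ∑ k, adj (f k) * q * f k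

end MatPoly

/-- `σ_#(k) = dim ℝ⟨x⟩_k`. -/
def sigmaSharp (g k : ℕ) : ℕ := ∑ j ∈ Finset.range (k + 1), g ^ j

/-!
For a word `w` of length `d + 1`, the coefficient of `w* w` in the `(i, i)` entry of
`∑ⱼ gⱼ* gⱼ` is `∑ⱼ ((gⱼ)ᵢ)_w²`, since `w* w` can only arise as a product of two words of
length `d + 1`. The terms `fⱼ* q fⱼ` have degree at most `2d + 1`, and so has `p`; hence this
coefficient vanishes, so every `((gⱼ)ᵢ)_w` is zero and each `gⱼ` has degree at most `d`.
-/

lemma FreeMonoid.eq_and_eq_of_mul_eq_mul {α : Type*} {u x w₁ w₂ : FreeMonoid α}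
    (h : u * x = w₁ * w₂) (hu : u.length ≤ w₁.length) (hx : x.length ≤ w₂.length) :
    u = w₁ ∧ x = w₂ := by
  have hlen : u.length = w₁.length := by
    have := congrArg length h
    simp only [length_mul] at this
    omega
  obtain ⟨h₁, h₂⟩ := List.append_inj (congrArg toList h) hlen
  exact ⟨toList.injective h₁, toList.injective h₂⟩

namespace NCPoly

variable {g : ℕ}

lemma wordStar_eq_reverse (w : FreeMonoid (Fin g)) : wordStar w = w.reverse := rfl

lemma coeff_adj (p : NCPoly g) (w : FreeMonoid (Fin g)) :
    (adj p).coeff w = p.coeff (wordStar w) := by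
  have hinj : Function.Injective (wordStar (g := g)) :=
    Function.Involutive.injective fun w => FreeMonoid.reverse_reverse (a := w)
  simpa [adj, wordStar_eq_reverse] using
    Finsupp.mapDomain_apply hinj p.coeff (wordStar w)

lemma deg_le_iff {p : NCPoly g} {n : ℕ} :
    deg p ≤ n ↔ ∀ w ∈ p.coeff.support, w.length ≤ n :=
  Finset.sup_le_iff

lemma length_le_deg {p : NCPoly g} {w : FreeMonoid (Fin g)} (hw : w ∈ p.coeff.support) :
    w.length ≤ deg p :=
  deg_le_iff.mp le_rfl w hw

lemma coeff_eq_zero_of_deg_lt {p : NCPoly g} {w : FreeMonoid (Fin g)} (h : deg p < w.length) :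
    p.coeff w = 0 :=
  Finsupp.notMem_support_iff.mp fun hw => (length_le_deg hw).not_gt h

lemma deg_adj_le (p : NCPoly g) : deg (adj p) ≤ deg p := by
  classical
  refine deg_le_iff.mpr fun w hw => ?_
  obtain ⟨u, hu, rfl⟩ := Finset.mem_image.mp (Finsupp.mapDomain_support hw)
  simpa [wordStar_eq_reverse] using length_le_deg hu

lemma deg_mul_le (p q : NCPoly g) : deg (p * q) ≤ deg p + deg q := by
  classical
  refine deg_le_iff.mpr fun w hw => ?_
  obtain ⟨u, hu, x, hx, rfl⟩ := Finset.mem_mul.mp (MonoidAlgebra.support_coeff_mul_subset p q hw)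
  rw [FreeMonoid.length_mul]
  exact add_le_add (length_le_deg hu) (length_le_deg hx)

lemma deg_add_le (p q : NCPoly g) : deg (p + q) ≤ max (deg p) (deg q) := by
  classical
  exact (Finset.sup_mono Finsupp.support_add).trans_eq Finset.sup_union

lemma deg_neg (p : NCPoly g) : deg (-p) = deg p := by
  rw [deg, MonoidAlgebra.coeff_neg, Finsupp.support_neg, deg]

lemma deg_sub_le (p q : NCPoly g) : deg (p - q) ≤ max (deg p) (deg q) := by
  simpa only [sub_eq_add_neg, deg_neg] using deg_add_le p (-q)

lemma deg_sum_le {ι : Type*} (s : Finset ι) (p : ι → NCPoly g) {n : ℕ}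
    (h : ∀ i ∈ s, deg (p i) ≤ n) : deg (∑ i ∈ s, p i) ≤ n :=
  Finset.sum_induction p (fun x => deg x ≤ n)
    (fun x y hx hy => (deg_add_le x y).trans (max_le hx hy)) (Nat.zero_le _) h

lemma deg_single_le (u : FreeMonoid (Fin g)) (c : ℝ) :
    deg (MonoidAlgebra.single u c : NCPoly g) ≤ u.length :=
  deg_le_iff.mpr fun _ hw => by rw [Finset.mem_singleton.mp (Finsupp.support_single_subset hw)]

lemma coeff_mul_of_deg_le {p q : NCPoly g} {w₁ w₂ : FreeMonoid (Fin g)}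
    (hp : deg p ≤ w₁.length) (hq : deg q ≤ w₂.length) :
    (p * q).coeff (w₁ * w₂) = p.coeff w₁ * q.coeff w₂ := by
  classical
  rw [MonoidAlgebra.coeff_mul, Finsupp.sum, Finset.sum_eq_single w₁]
  · rw [Finsupp.sum, Finset.sum_eq_single w₂, if_pos rfl]
    · intro x hx hne
      exact if_neg fun h => hne (mul_left_cancel h)
    · intro hw₂
      rw [if_pos rfl, Finsupp.notMem_support_iff.mp hw₂, mul_zero]
  · intro u hu hne
    exact Finset.sum_eq_zero fun x hx => if_neg fun h => hne
      (FreeMonoid.eq_and_eq_of_mul_eq_mul h ((length_le_deg hu).trans hp)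
        ((length_le_deg hx).trans hq)).1
  · intro hw₁
    exact Finset.sum_eq_zero fun x _ => by simp [Finsupp.notMem_support_iff.mp hw₁]

lemma coeff_adj_mul_self {p : NCPoly g} {w : FreeMonoid (Fin g)} (hp : deg p ≤ w.length) :
    (adj p * p).coeff (wordStar w * w) = p.coeff w * p.coeff w := by
  have hp' : deg (adj p) ≤ (wordStar w).length := by
    simpa [wordStar_eq_reverse] using (deg_adj_le p).trans hp
  rw [coeff_mul_of_deg_le hp' hp, coeff_adj, wordStar_eq_reverse, wordStar_eq_reverse,
    FreeMonoid.reverse_reverse]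

lemma deg_le_of_deg_sum_adj_mul_self_le {ι : Type*} [Fintype ι] {v : ι → NCPoly g} {e : ℕ}
    (hv : ∀ k, deg (v k) ≤ e + 1) (hsum : deg (∑ k, adj (v k) * v k) ≤ 2 * e + 1) (k : ι) :
    deg (v k) ≤ e := by
  refine deg_le_iff.mpr fun w hw => ?_
  by_contra! hlong
  have hw_len : w.length = e + 1 := le_antisymm ((length_le_deg hw).trans (hv k)) hlong
  have htop : ∑ j, (v j).coeff w * (v j).coeff w = 0 := by
    have hzero : (∑ j, adj (v j) * v j).coeff (wordStar w * w) = 0 :=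
      coeff_eq_zero_of_deg_lt (by simp [FreeMonoid.length_mul, wordStar_eq_reverse]; omega)
    rwa [MonoidAlgebra.coeff_sum, Finsupp.finsetSum_apply,
      Finset.sum_congr rfl fun j _ => coeff_adj_mul_self (hw_len ▸ hv j)] at hzero
  have hk := (Finset.sum_eq_zero_iff_of_nonneg fun j _ => mul_self_nonneg ((v j).coeff w)).mp
    htop k (Finset.mem_univ k)
  exact Finsupp.mem_support_iff.mp hw (mul_self_eq_zero.mp hk)

end NCPoly

namespace MatPoly

variable {g : ℕ} {I J K : Type*} [Fintype I] [Fintype J] [Fintype K]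

lemma deg_le_iff {P : MatPoly g I J} {n : ℕ} : deg P ≤ n ↔ ∀ i j, NCPoly.deg (P i j) ≤ n := by
  simp [deg, Finset.sup_le_iff]

lemma deg_apply_le (P : MatPoly g I J) (i : I) (j : J) : NCPoly.deg (P i j) ≤ deg P :=
  deg_le_iff.mp le_rfl i j

lemma deg_adj_le (P : MatPoly g I J) : deg (adj P) ≤ deg P :=
  deg_le_iff.mpr fun i j => (NCPoly.deg_adj_le _).trans (deg_apply_le P j i)

lemma deg_mul_le (P : MatPoly g I J) (Q : MatPoly g J K) : deg (P * Q) ≤ deg P + deg Q :=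
  deg_le_iff.mpr fun i k => NCPoly.deg_sum_le _ _ fun j _ =>
    (NCPoly.deg_mul_le _ _).trans (add_le_add (deg_apply_le P i j) (deg_apply_le Q j k))

lemma deg_adj_mul_mul_le (F : MatPoly g I J) (Q : MatPoly g I I) :
    deg (adj F * Q * F) ≤ 2 * deg F + deg Q := by
  have h₁ := deg_mul_le (adj F * Q) F
  have h₂ := deg_mul_le (adj F) Q
  have h₃ := deg_adj_le F
  omega

lemma deg_sub_le (P Q : MatPoly g I J) : deg (P - Q) ≤ max (deg P) (deg Q) :=
  deg_le_iff.mpr fun i j =>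
    (NCPoly.deg_sub_le _ _).trans (max_le_max (deg_apply_le P i j) (deg_apply_le Q i j))

lemma deg_sum_le {ι : Type*} (s : Finset ι) (P : ι → MatPoly g I J) {n : ℕ}
    (h : ∀ k ∈ s, deg (P k) ≤ n) : deg (∑ k ∈ s, P k) ≤ n :=
  deg_le_iff.mpr fun i j => by
    rw [Matrix.sum_apply]
    exact NCPoly.deg_sum_le _ _ fun k hk => (deg_apply_le _ i j).trans (h k hk)

lemma deg_pencil_le {ℓ : ℕ} (A : Fin g → Matrix (Fin ℓ) (Fin ℓ) ℝ) : deg (pencil A) ≤ 1 := by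
  have hone : deg (1 : MatPoly g (Fin ℓ) (Fin ℓ)) ≤ 1 := deg_le_iff.mpr fun i j => by
    rw [Matrix.one_apply]
    split_ifs <;> simp [NCPoly.deg]
  have hlin : deg (∑ j, (A j).map fun c => MonoidAlgebra.single (FreeMonoid.of j) c) ≤ 1 :=
    deg_sum_le _ _ fun j _ => deg_le_iff.mpr fun _ _ => NCPoly.deg_single_le _ _
  exact (deg_sub_le _ _).trans (max_le hone hlin)

end MatPoly

theorem stmt0_general {g ℓ ν d : ℕ} (A : Fin g → Matrix (Fin ℓ) (Fin ℓ) ℝ)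
    (p : MatPoly g (Fin ν) (Fin ν)) (hpdeg : MatPoly.deg p ≤ 2 * d + 1)
    (m m' : ℕ) (v : Fin m → Fin ν → NCPoly g)
    (f : Fin m' → MatPoly g (Fin ℓ) (Fin ν))
    (hv : ∀ k i, NCPoly.deg (v k i) ≤ d + 1)
    (hf : ∀ k, MatPoly.deg (f k) ≤ d)
    (hrep : p = (Matrix.of fun i j => ∑ k, NCPoly.adj (v k i) * v k j) +
      ∑ k, MatPoly.adj (f k) * MatPoly.pencil A * f k) :
    (∀ k i, NCPoly.deg (v k i) ≤ d) ∧
      MatPoly.InM d d (MatPoly.pencil A) p := by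
  have hsos : MatPoly.deg (Matrix.of fun i j => ∑ k, NCPoly.adj (v k i) * v k j) ≤ 2 * d + 1 := by
    rw [eq_sub_of_add_eq hrep.symm]
    refine (MatPoly.deg_sub_le _ _).trans (max_le hpdeg (MatPoly.deg_sum_le _ _ fun k _ => ?_))
    linarith [MatPoly.deg_adj_mul_mul_le (f k) (MatPoly.pencil A), MatPoly.deg_pencil_le (g := g) A,
      hf k]
  have hv' : ∀ k i, NCPoly.deg (v k i) ≤ d := fun k i =>
    NCPoly.deg_le_of_deg_sum_adj_mul_self_le (fun k => hv k i)
      ((MatPoly.deg_apply_le _ i i).trans hsos) k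
  exact ⟨hv', _, m', f, ⟨m, v, hv', rfl⟩, hf, hrep⟩

/-- degree drop in a weighted SOS representation over a monic
linear pencil: if `deg p ≤ 2d+1`, each square in an `M_{d+1,d}` certificate has
degree at most `d`, so `p ∈ M_{d,d}(q)`. -/
theorem stmt0 {g ℓ ν d : ℕ} (A : Fin g → Matrix (Fin ℓ) (Fin ℓ) ℝ)
    (hA : ∀ j, (A j).IsSymm)
    (p : MatPoly g (Fin ν) (Fin ν)) (hpdeg : MatPoly.deg p ≤ 2 * d + 1)
    (m m' : ℕ) (v : Fin m → Fin ν → NCPoly g)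
    (f : Fin m' → MatPoly g (Fin ℓ) (Fin ν))
    (hv : ∀ k i, NCPoly.deg (v k i) ≤ d + 1)
    (hf : ∀ k, MatPoly.deg (f k) ≤ d)
    (hrep : p = (Matrix.of fun i j => ∑ k, NCPoly.adj (v k i) * v k j) +
      ∑ k, MatPoly.adj (f k) * MatPoly.pencil A * f k) :
    (∀ k i, NCPoly.deg (v k i) ≤ d) ∧
      MatPoly.InM d d (MatPoly.pencil A) p :=
  stmt0_general A p hpdeg m m' v f hv hf hrep
end
end

section
/- There exists a monic linear pencil L such that span{I, A_1, …, A_g} admits a representation I = Σ_j W_j* L(x) W_j if and only if there exist nonzero vectors h_k with Σ_k ⟨A_j h_k, h_k⟩ = 0 for each j; and this happens if and only if span{A_1,…,A_g} contains no positive definite matrix. -/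
open scoped Matrix BigOperators
noncomputable section

/-- The constant embedding of a real matrix into matrix polynomials. -/
def constM {g : ℕ} {I J : Type*} (W : Matrix I J ℝ) : MatPoly g I J :=
  W.map (algebraMap ℝ (NCPoly g))

/-!
Comparing the coefficients of the words `1` and `x_j`, `I = Σ_k W_kᵀ L W_k` amounts to
`Σ_k W_kᵀ W_k = I` and `Σ_k W_kᵀ A_j W_k = 0`. Taking traces, the columns `h` of all the `W_k`
satisfy `Σ ⟨A_j h, h⟩ = 0` and `Σ |h|² = ℓ' > 0`. Conversely, a nonzero family `h_k` with
`Σ_k ⟨A_j h_k, h_k⟩ = 0`, normalised to `Σ_k |h_k|² = 1`, gives the identity with the matrices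
`W = h_k e_bᵀ`.

For Bohnenblust's theorem, let `K ⊆ ℝ^g` be the image of the unit sphere under
`v ↦ (⟨A_j v, v⟩)_j`. If `0 = Σ_k w_k (⟨A_j v_k, v_k⟩)_j` lies in `conv K`, then `h_k = √w_k v_k`
is such a family. Otherwise,
as `conv K` is compact by Carathéodory, a functional `c` separates it from `0`, and then
`⟨(Σ c_j A_j) v, v⟩ > 0` on the sphere.
-/

open Matrix

theorem IsCompact.convexHull {E : Type*} [NormedAddCommGroup E] [NormedSpace ℝ E]
    [FiniteDimensional ℝ E] {s : Set E} (hs : IsCompact s) : IsCompact (convexHull ℝ s) := by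
  set d := Module.finrank ℝ E
  let F : (Fin (d + 1) → ℝ) × (Fin (d + 1) → E) → E := fun p => ∑ i, p.1 i • p.2 i
  suffices _root_.convexHull ℝ s = F '' (stdSimplex ℝ (Fin (d + 1)) ×ˢ Set.univ.pi fun _ => s) by
    rw [this]
    exact ((isCompact_stdSimplex ℝ _).prod (isCompact_univ_pi fun _ => hs)).image (by fun_prop)
  refine subset_antisymm (fun x hx => ?_) ?_
  · obtain ⟨ι, _, z, w, hzs, hz, hw0, hw1, rfl⟩ := eq_pos_convex_span_of_mem_convexHull hx
    obtain ⟨i₀⟩ : Nonempty ι := by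
      by_contra hι
      simp [not_nonempty_iff.1 hι] at hw1
    have hcard : Fintype.card ι ≤ d + 1 :=
      hz.card_le_finrank_succ.trans (Nat.succ_le_succ (Submodule.finrank_le _))
    -- pad the affinely independent combination with zero weights up to `d + 1` points
    let e : ι ⊕ Fin (d + 1 - Fintype.card ι) ≃ Fin (d + 1) :=
      Fintype.equivOfCardEq (by simp; omega)
    refine ⟨(Sum.elim w 0 ∘ e.symm, Sum.elim z (fun _ => z i₀) ∘ e.symm), ⟨⟨fun i => ?_, ?_⟩,
      fun i _ => ?_⟩, ?_⟩
    · exact (Sum.forall (p := fun j => 0 ≤ Sum.elim w 0 j)).2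
        ⟨fun j => (hw0 j).le, fun _ => le_rfl⟩ _
    · simp [e.symm.sum_comp (Sum.elim w 0), hw1]
    · exact (Sum.forall (p := fun j => Sum.elim z (fun _ => z i₀) j ∈ s)).2
        ⟨fun j => hzs ⟨j, rfl⟩, fun _ => hzs ⟨i₀, rfl⟩⟩ _
    · simp [F, e.symm.sum_comp (fun i => Sum.elim w 0 i • Sum.elim z (fun _ => z i₀) i)]
  · rintro _ ⟨⟨w, z⟩, ⟨hw, hz⟩, rfl⟩
    exact mem_convexHull_of_exists_fintype w z hw.1 hw.2 (fun i => hz i trivial) rfl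

lemma ContinuousLinearMap.single_one_dotProduct {ι R : Type*} [Fintype ι] [DecidableEq ι]
    [CommSemiring R] [TopologicalSpace R] (f : (ι → R) →L[R] R) (x : ι → R) :
    (fun j => f (Pi.single j 1)) ⬝ᵥ x = f x := by
  conv_rhs => rw [← Finset.univ_sum_single x]
  simp only [dotProduct, map_sum]
  refine Finset.sum_congr rfl fun j _ => ?_
  rw [mul_comm, ← smul_eq_mul, ← map_smul, ← Pi.single_smul', smul_eq_mul, mul_one]

section IsotropicFamily

variable {ι n : Type*} [Fintype n]

def HasIsotropicFamily (A : ι → Matrix n n ℝ) : Prop :=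
  ∃ (m : ℕ) (h : Fin m → n → ℝ), 0 < m ∧ (∀ k, h k ≠ 0) ∧
    ∀ j, (∑ k, (A j).mulVec (h k) ⬝ᵥ h k) = 0

lemma HasIsotropicFamily.of_sum_eq_zero {A : ι → Matrix n n ℝ} {κ : Type*} [Fintype κ]
    (h : κ → n → ℝ) (hne : ∃ k, h k ≠ 0) (hsum : ∀ j, ∑ k, A j *ᵥ h k ⬝ᵥ h k = 0) :
    HasIsotropicFamily A := by
  classical
  let S := Finset.univ.filter fun k => h k ≠ 0
  obtain ⟨k₀, hk₀⟩ := hne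
  refine ⟨S.card, fun k => h (S.equivFin.symm k), Finset.card_pos.2 ⟨k₀, by simp [S, hk₀]⟩,
    fun k => (Finset.mem_filter.1 (S.equivFin.symm k).2).2, fun j => ?_⟩
  rw [S.equivFin.symm.sum_comp (fun k : S => A j *ᵥ h k ⬝ᵥ h k),
    Finset.sum_coe_sort S (fun k => A j *ᵥ h k ⬝ᵥ h k),
    Finset.sum_filter_of_ne fun k _ hk hzero => by simp [hzero] at hk, hsum]

lemma mulVec_smul_dotProduct_smul (M : Matrix n n ℝ) (a : ℝ) (v : n → ℝ) :
    M *ᵥ (a • v) ⬝ᵥ (a • v) = a * a * (M *ᵥ v ⬝ᵥ v) := by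
  simp only [mulVec_smul, smul_dotProduct, dotProduct_smul, smul_eq_mul]
  ring

def quadValues (A : ι → Matrix n n ℝ) (v : n → ℝ) : ι → ℝ := fun j => A j *ᵥ v ⬝ᵥ v

lemma quadValues_smul (A : ι → Matrix n n ℝ) (a : ℝ) (v : n → ℝ) :
    quadValues A (a • v) = (a * a) • quadValues A v :=
  funext fun j => mulVec_smul_dotProduct_smul (A j) a v

lemma sum_smul_mulVec_dotProduct [Fintype ι] (A : ι → Matrix n n ℝ) (c : ι → ℝ) (v : n → ℝ) :
    (∑ j, c j • A j) *ᵥ v ⬝ᵥ v = c ⬝ᵥ quadValues A v := by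
  simp only [sum_mulVec, sum_dotProduct, smul_mulVec, smul_dotProduct, smul_eq_mul]
  rfl

end IsotropicFamily

section Bohnenblust

variable {ι n : Type*} [Fintype n] {A : ι → Matrix n n ℝ}

lemma HasIsotropicFamily.not_exists_posDef [Fintype ι] (hA : HasIsotropicFamily A) :
    ¬ ∃ c : ι → ℝ, (∑ j, c j • A j).PosDef := by
  rintro ⟨c, hc⟩
  obtain ⟨m, h, hm, hne, hsum⟩ := hA
  have hpos : 0 < ∑ k, (∑ j, c j • A j) *ᵥ h k ⬝ᵥ h k :=
    Finset.sum_pos (fun k _ => by simpa [dotProduct_comm] using hc.dotProduct_mulVec_pos (hne k))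
      (Finset.univ_nonempty_iff.2 ⟨⟨0, hm⟩⟩)
  have hzero : ∑ k, quadValues A (h k) = 0 := funext fun j => by
    simpa [quadValues] using hsum j
  simp only [sum_smul_mulVec_dotProduct, ← dotProduct_sum, hzero, dotProduct_zero] at hpos
  exact hpos.false

lemma HasIsotropicFamily.of_zero_mem_convexHull
    (h0 : (0 : ι → ℝ) ∈ convexHull ℝ (quadValues A '' Metric.sphere 0 1)) :
    HasIsotropicFamily A := by
  obtain ⟨κ, _, w, z, hw0, hw1, hz, hsum⟩ := mem_convexHull_iff_exists_fintype.1 h0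
  choose v hv hvz using hz
  obtain ⟨k, -, hk⟩ := Finset.exists_ne_zero_of_sum_ne_zero (hw1.trans_ne one_ne_zero)
  refine .of_sum_eq_zero (fun k => √(w k) • v k) ⟨k, smul_ne_zero
    (Real.sqrt_ne_zero'.2 ((hw0 k).lt_of_ne' hk)) (ne_zero_of_mem_sphere one_ne_zero ⟨_, hv k⟩)⟩
    fun j => ?_
  simp_rw [mulVec_smul_dotProduct_smul, Real.mul_self_sqrt (hw0 _)]
  simpa [Finset.sum_apply, ← hvz, quadValues] using congrFun hsum j

lemma posDef_sum_smul_of_forall_mem_sphere [Fintype ι] (hA : ∀ j, (A j).IsSymm) (c : ι → ℝ)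
    (hc : ∀ v ∈ Metric.sphere (0 : n → ℝ) 1, 0 < c ⬝ᵥ quadValues A v) :
    (∑ j, c j • A j).PosDef := by
  refine .of_dotProduct_mulVec_pos ?_ fun v hv => ?_
  · rw [isHermitian_iff_isSymm, IsSymm, transpose_sum]
    exact Finset.sum_congr rfl fun j _ => by rw [transpose_smul, hA j]
  · have hv' := hc _ (mem_sphere_zero_iff_norm.2 (norm_smul_inv_norm (𝕜 := ℝ) hv))
    rw [quadValues_smul, dotProduct_smul, smul_eq_mul] at hv'
    rw [star_trivial, dotProduct_comm, sum_smul_mulVec_dotProduct]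
    exact pos_of_mul_pos_right hv' (by positivity)

lemma exists_posDef_of_zero_notMem_convexHull [Fintype ι] (hA : ∀ j, (A j).IsSymm)
    (h0 : (0 : ι → ℝ) ∉ convexHull ℝ (quadValues A '' Metric.sphere 0 1)) :
    ∃ c : ι → ℝ, (∑ j, c j • A j).PosDef := by
  classical
  have hK : IsCompact (quadValues A '' Metric.sphere 0 1) :=
    (isCompact_sphere 0 1).image (by unfold quadValues; fun_prop)
  obtain ⟨f, u, hf0, hfK⟩ :=
    geometric_hahn_banach_point_closed (convex_convexHull ℝ _) hK.convexHull.isClosed h0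
  refine ⟨fun j => f (Pi.single j 1), posDef_sum_smul_of_forall_mem_sphere hA _ fun v hv => ?_⟩
  rw [f.single_one_dotProduct]
  linarith [map_zero f ▸ hf0, hfK _ (subset_convexHull ℝ _ ⟨v, hv, rfl⟩)]

theorem hasIsotropicFamily_iff_not_exists_posDef [Fintype ι] (hA : ∀ j, (A j).IsSymm) :
    HasIsotropicFamily A ↔ ¬ ∃ c : ι → ℝ, (∑ j, c j • A j).PosDef :=
  ⟨HasIsotropicFamily.not_exists_posDef, fun h => by_contra fun hno =>
    h (exists_posDef_of_zero_notMem_convexHull hA (mt .of_zero_mem_convexHull hno))⟩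

end Bohnenblust

section SumOfConjugates

variable {ι n J : Type*} [Fintype n] [Fintype J] {A : ι → Matrix n n ℝ}

lemma trace_transpose_mul_mul (W : Matrix n J ℝ) (M : Matrix n n ℝ) :
    trace (Wᵀ * M * W) = ∑ b, M *ᵥ Wᵀ b ⬝ᵥ Wᵀ b := by
  simp only [trace, diag, mul_apply, mulVec, dotProduct, transpose_apply, Finset.sum_mul]
  refine Finset.sum_congr rfl fun b _ => Finset.sum_comm.trans ?_
  exact Finset.sum_congr rfl fun i _ => Finset.sum_congr rfl fun i' _ => by ring

omit [Fintype J] in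
lemma transpose_vecMulVec_mul_mul_vecMulVec (u : n → ℝ) (v : J → ℝ) (M : Matrix n n ℝ) :
    (vecMulVec u v)ᵀ * M * vecMulVec u v = (M *ᵥ u ⬝ᵥ u) • vecMulVec v v := by
  rw [transpose_vecMulVec, vecMulVec_mul, vecMulVec_mul_vecMulVec, ← dotProduct_mulVec,
    dotProduct_comm, vecMulVec_smul]

lemma HasIsotropicFamily.of_sum_transpose_mul_mul [DecidableEq J] [Nonempty J] {κ : Type*}
    [Fintype κ] (W : κ → Matrix n J ℝ) (hW : ∑ k, (W k)ᵀ * W k = 1)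
    (hWA : ∀ j, ∑ k, (W k)ᵀ * A j * W k = 0) : HasIsotropicFamily A := by
  classical
  have htrace (M : Matrix n n ℝ) :
      ∑ p : κ × J, M *ᵥ (W p.1)ᵀ p.2 ⬝ᵥ (W p.1)ᵀ p.2 = trace (∑ k, (W k)ᵀ * M * W k) := by
    simp only [Fintype.sum_prod_type, trace_sum, trace_transpose_mul_mul]
  refine .of_sum_eq_zero (fun p : κ × J => (W p.1)ᵀ p.2) ?_ fun j => by
    rw [htrace, hWA, trace_zero]
  by_contra! hzero
  have := htrace 1
  simp only [hzero, dotProduct_zero, Finset.sum_const_zero, Matrix.mul_one, hW, trace_one] at this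
  exact Nat.cast_ne_zero.2 Fintype.card_ne_zero this.symm

lemma HasIsotropicFamily.exists_sum_transpose_mul_mul [DecidableEq J]
    (hA : HasIsotropicFamily A) : ∃ (m : ℕ) (W : Fin m → Matrix n J ℝ),
      ∑ k, (W k)ᵀ * W k = 1 ∧ ∀ j, ∑ k, (W k)ᵀ * A j * W k = 0 := by
  classical
  obtain ⟨m, h, hm, hne, hsum⟩ := hA
  set t := ∑ k, h k ⬝ᵥ h k
  have ht : 0 < t :=
    Finset.sum_pos (fun k _ => by simpa using dotProduct_star_self_pos_iff.2 (hne k))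
      (Finset.univ_nonempty_iff.2 ⟨⟨0, hm⟩⟩)
  let W : Fin m × J → Matrix n J ℝ := fun p => vecMulVec ((√t)⁻¹ • h p.1) (Pi.single p.2 1)
  have hconj (M : Matrix n n ℝ) :
      ∑ p, (W p)ᵀ * M * W p = (t⁻¹ * ∑ k, M *ᵥ h k ⬝ᵥ h k) • 1 := by
    simp only [W, transpose_vecMulVec_mul_mul_vecMulVec, mulVec_smul_dotProduct_smul,
      Fintype.sum_prod_type, ← Finset.smul_sum, ← single_eq_single_vecMulVec_single,
      sum_single_one, ← Finset.sum_smul, ← Finset.mul_sum]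
    rw [← mul_inv, Real.mul_self_sqrt ht.le]
  let e := Fintype.equivFin (Fin m × J)
  refine ⟨_, W ∘ e.symm, ?_, fun j => ?_⟩
  · simp_rw [Function.comp_apply, e.symm.sum_comp (fun p => (W p)ᵀ * W p)]
    simpa [ht.ne', t] using hconj 1
  · simp_rw [Function.comp_apply, e.symm.sum_comp (fun p => (W p)ᵀ * A j * W p), hconj, hsum,
      mul_zero, zero_smul]

lemma exists_sum_transpose_mul_mul_iff [DecidableEq J] [Nonempty J] :
    (∃ (m : ℕ) (W : Fin m → Matrix n J ℝ),
      ∑ k, (W k)ᵀ * W k = 1 ∧ ∀ j, ∑ k, (W k)ᵀ * A j * W k = 0) ↔ HasIsotropicFamily A :=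
  ⟨fun ⟨_, W, hW, hWA⟩ => .of_sum_transpose_mul_mul W hW hWA,
    HasIsotropicFamily.exists_sum_transpose_mul_mul⟩

end SumOfConjugates

namespace MatPoly

variable {g : ℕ} {I J : Type*}

def monomial (w : FreeMonoid (Fin g)) : Matrix I J ℝ →+ MatPoly g I J :=
  (MonoidAlgebra.singleAddHom w).mapMatrix

def coeffMatrix (w : FreeMonoid (Fin g)) : MatPoly g I J →+ Matrix I J ℝ :=
  ((Finsupp.applyAddHom w).comp MonoidAlgebra.coeffAddEquiv.toAddMonoidHom).mapMatrix

lemma coeffMatrix_monomial_self (w : FreeMonoid (Fin g)) (M : Matrix I J ℝ) :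
    coeffMatrix w (monomial w M) = M := by
  ext
  simp [coeffMatrix, monomial]

lemma coeffMatrix_monomial_of_ne {w w' : FreeMonoid (Fin g)} (h : w ≠ w') (M : Matrix I J ℝ) :
    coeffMatrix w' (monomial w M) = 0 := by
  ext
  simp [coeffMatrix, monomial, h]

lemma monomial_one_one [DecidableEq I] : monomial (g := g) 1 (1 : Matrix I I ℝ) = 1 :=
  Matrix.map_one _ (MonoidAlgebra.single_zero 1) MonoidAlgebra.one_def.symm

lemma pencil_eq_monomial_sub_sum {ℓ : ℕ} (A : Fin g → Matrix (Fin ℓ) (Fin ℓ) ℝ) :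
    pencil A = monomial 1 1 - ∑ j, monomial (FreeMonoid.of j) (A j) := by
  rw [monomial_one_one]
  rfl

lemma constM_mul_monomial_mul_constM {K L : Type*} [Fintype J] [Fintype K] (B : Matrix I J ℝ)
    (w : FreeMonoid (Fin g)) (M : Matrix J K ℝ) (C : Matrix K L ℝ) :
    (constM B : MatPoly g I J) * monomial w M * (constM C : MatPoly g K L) =
      monomial w (B * M * C) := by
  ext i l
  simp [constM, monomial, mul_apply, Finset.sum_mul, MonoidAlgebra.single_mul_single]

lemma sum_constM_transpose_mul_pencil_mul_constM {ℓ : ℕ} {κ : Type*} [Fintype κ]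
    (A : Fin g → Matrix (Fin ℓ) (Fin ℓ) ℝ) (W : κ → Matrix (Fin ℓ) J ℝ) :
    ∑ k, (constM (W k)ᵀ : MatPoly g J (Fin ℓ)) * pencil A * (constM (W k) : MatPoly g (Fin ℓ) J) =
      monomial 1 (∑ k, (W k)ᵀ * W k) -
        ∑ j, monomial (FreeMonoid.of j) (∑ k, (W k)ᵀ * A j * W k) := by
  simp only [pencil_eq_monomial_sub_sum, Matrix.mul_sub, Matrix.sub_mul, Matrix.mul_sum,
    Matrix.sum_mul, constM_mul_monomial_mul_constM, Matrix.mul_one, map_sum,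
    Finset.sum_sub_distrib]
  rw [Finset.sum_comm]

lemma one_eq_monomial_sub_sum_iff [DecidableEq I] (S : Matrix I I ℝ) (T : Fin g → Matrix I I ℝ) :
    (1 : MatPoly g I I) = monomial 1 S - ∑ j, monomial (FreeMonoid.of j) (T j) ↔
      S = 1 ∧ ∀ j, T j = 0 := by
  refine ⟨fun h => ⟨?_, fun j => ?_⟩, fun ⟨hS, hT⟩ => by simp [hS, hT, monomial_one_one]⟩
  · simpa [← monomial_one_one, coeffMatrix_monomial_self, coeffMatrix_monomial_of_ne,
      FreeMonoid.of_ne_one] using (congrArg (coeffMatrix 1) h).symm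
  · have hj := congrArg (coeffMatrix (FreeMonoid.of j)) h
    rwa [← monomial_one_one, map_sub, map_sum,
      coeffMatrix_monomial_of_ne (FreeMonoid.of_ne_one j).symm,
      coeffMatrix_monomial_of_ne (FreeMonoid.of_ne_one j).symm, zero_sub, Finset.sum_eq_single j
        (fun j' _ hj' => coeffMatrix_monomial_of_ne (FreeMonoid.of_injective.ne hj') _) (by simp),
      coeffMatrix_monomial_self, zero_eq_neg] at hj

end MatPoly

lemma exists_one_eq_sum_conj_pencil_iff {g ℓ ℓ' : ℕ} (A : Fin g → Matrix (Fin ℓ) (Fin ℓ) ℝ)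
    (hℓ' : 0 < ℓ') :
    (∃ (m : ℕ) (W : Fin m → Matrix (Fin ℓ) (Fin ℓ') ℝ),
        (1 : MatPoly g (Fin ℓ') (Fin ℓ')) =
          ∑ k, (constM (W k)ᵀ * MatPoly.pencil A : MatPoly g (Fin ℓ') (Fin ℓ)) * constM (W k)) ↔
      HasIsotropicFamily A := by
  have : Nonempty (Fin ℓ') := ⟨⟨0, hℓ'⟩⟩
  refine (exists_congr fun m => exists_congr fun W => ?_).trans exists_sum_transpose_mul_mul_iff
  rw [← MatPoly.one_eq_monomial_sub_sum_iff, ← MatPoly.sum_constM_transpose_mul_pencil_mul_constM]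
  -- the statement's products use `CStarMatrix`'s multiplication, defeq to `Matrix`'s
  rfl

/-- for a monic linear pencil `L = I - Σ A_j x_j`, the identity
`I = Σ_j W_j* L(x) W_j` is achievable iff there exist (finitely many) nonzero
vectors `h_k` with `Σ_k ⟨A_j h_k, h_k⟩ = 0` for each `j`, and this happens iff
`span{A_1,…,A_g}` contains no positive definite matrix (Bohnenblust). -/
theorem stmt15 {g ℓ : ℕ} (A : Fin g → Matrix (Fin ℓ) (Fin ℓ) ℝ)
    (hA : ∀ j, (A j).IsSymm) (ℓ' : ℕ) (hℓ' : 0 < ℓ') :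
    ((∃ (m : ℕ) (W : Fin m → Matrix (Fin ℓ) (Fin ℓ') ℝ),
        (1 : MatPoly g (Fin ℓ') (Fin ℓ')) =
          ∑ k, (constM (W k)ᵀ * MatPoly.pencil A : MatPoly g (Fin ℓ') (Fin ℓ)) * constM (W k))
      ↔ (∃ (m : ℕ) (h : Fin m → Fin ℓ → ℝ), 0 < m ∧ (∀ k, h k ≠ 0) ∧
          ∀ j, (∑ k, (A j).mulVec (h k) ⬝ᵥ h k) = 0))
    ∧ ((∃ (m : ℕ) (h : Fin m → Fin ℓ → ℝ), 0 < m ∧ (∀ k, h k ≠ 0) ∧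
          ∀ j, (∑ k, (A j).mulVec (h k) ⬝ᵥ h k) = 0)
      ↔ ¬ ∃ c : Fin g → ℝ, (∑ j, c j • A j).PosDef) :=
  ⟨exists_one_eq_sum_conj_pencil_iff A hℓ', hasIsotropicFamily_iff_not_exists_posDef hA⟩
end
end
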